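/- arXiv:1010.2892 — 5 statements merged into one kernel-verified Lean document; each statement's English description precedes it below -/
import Mathlib

section
/- Let N ≥ 1, Λ > 1, r₀ > 0, Φ > 0. Define E(q,ξ) = r₀Φ² + Σ_{(i,j) ∈ B_N} r₀ q_{i,j}²/ξ_{i,j} over pairs (q,ξ) where q ∈ ℝ^{2^{N+1}-2} satisfies Σ_{j=1}^{2^i} q_{i,j} = Φ for every level i ∈ {1,...,N}, and ξ has positive entries with Σ_{(i,j)} ξ_{i,j} = Λ - 1. Then the infimum of E over this set equals r₀Φ²(1 + N²/(Λ-1)), it is attained, and any minimizer (q*,ξ*) satisfies q*_{i,j}/ξ*_{i,j} = NΦ/(Λ-1) for all (i,j). -/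
/-!
Writing `Q = ∑ q` and `V = ∑ ξ`, completing the square branchwise gives
`∑ q²/ξ = Q²/V + ∑ (q - (Q/V) ξ)²/ξ`, so `∑ q²/ξ ≥ Q²/V` with equality exactly when
`q/ξ` is constant (Sedrakyan's form of Cauchy–Schwarz). On the tree the level constraints force
`Q = NΦ` whatever the individual flows are, and `V = Λ - 1`. The bound is attained by
splitting, on each level `i`, both the flow `Φ` and the volume `(Λ - 1)/N` evenly among
the `2^i` branches.
-/

open Finset

section SumSqDiv

variable {ι : Type*} (s : Finset ι) (q ξ : ι → ℝ)

theorem sum_sq_div_eq_sq_sum_div_add (hξ : ∀ i ∈ s, ξ i ≠ 0)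
    (hV : ∑ i ∈ s, ξ i ≠ 0) :
    ∑ i ∈ s, q i ^ 2 / ξ i = (∑ i ∈ s, q i) ^ 2 / ∑ i ∈ s, ξ i +
      ∑ i ∈ s, (q i - (∑ i ∈ s, q i) / (∑ i ∈ s, ξ i) * ξ i) ^ 2 / ξ i := by
  set c := (∑ i ∈ s, q i) / ∑ i ∈ s, ξ i
  have hpoint : ∀ i ∈ s,
      q i ^ 2 / ξ i = (q i - c * ξ i) ^ 2 / ξ i + (2 * c * q i - c ^ 2 * ξ i) := by
    intro i hi
    field_simp [hξ i hi]
    ring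
  have hcross :
      2 * c * ∑ i ∈ s, q i - c ^ 2 * ∑ i ∈ s, ξ i = (∑ i ∈ s, q i) ^ 2 / ∑ i ∈ s, ξ i := by
    simp only [c]
    field_simp
    ring
  rw [sum_congr rfl hpoint, sum_add_distrib, sum_sub_distrib, ← mul_sum, ← mul_sum, hcross,
    add_comm]

theorem sum_sq_div_eq_sq_sum_div_iff (hξ : ∀ i ∈ s, 0 < ξ i) :
    ∑ i ∈ s, q i ^ 2 / ξ i = (∑ i ∈ s, q i) ^ 2 / ∑ i ∈ s, ξ i ↔
      ∀ i ∈ s, q i / ξ i = (∑ i ∈ s, q i) / ∑ i ∈ s, ξ i := by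
  rcases s.eq_empty_or_nonempty with rfl | hs
  · simp
  have hV : 0 < ∑ i ∈ s, ξ i := sum_pos hξ hs
  rw [sum_sq_div_eq_sq_sum_div_add s q ξ (fun i hi => (hξ i hi).ne') hV.ne',
    add_eq_left, sum_eq_zero_iff_of_nonneg fun i hi => div_nonneg (sq_nonneg _) (hξ i hi).le]
  refine forall₂_congr fun i hi => ?_
  rw [div_eq_zero_iff, or_iff_left (hξ i hi).ne', sq_eq_zero_iff, sub_eq_zero,
    div_eq_iff (hξ i hi).ne']

end SumSqDiv

def dyadicBranches (N : ℕ) : Finset (Σ _ : ℕ, ℕ) :=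
  (Icc 1 N).sigma fun i => Icc 1 (2 ^ i)

theorem sum_dyadicBranches {M : Type*} [AddCommMonoid M] (N : ℕ) (f : ℕ → ℕ → M) :
    ∑ x ∈ dyadicBranches N, f x.1 x.2 = ∑ i ∈ Icc 1 N, ∑ j ∈ Icc 1 (2 ^ i), f i j :=
  sum_sigma _ _ _

theorem forall_mem_dyadicBranches {N : ℕ} {P : (Σ _ : ℕ, ℕ) → Prop} :
    (∀ x ∈ dyadicBranches N, P x) ↔ ∀ i ∈ Icc 1 N, ∀ j ∈ Icc 1 (2 ^ i), P ⟨i, j⟩ :=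
  ⟨fun h i hi j hj => h ⟨i, j⟩ (mem_sigma.2 ⟨hi, hj⟩),
    fun h _ hx => h _ (mem_sigma.1 hx).1 _ (mem_sigma.1 hx).2⟩

theorem sum_Icc_div_two_pow (i : ℕ) (a : ℝ) : ∑ _j ∈ Icc 1 (2 ^ i), a / 2 ^ i = a := by
  rw [sum_const, Nat.card_Icc, Nat.add_sub_cancel, nsmul_eq_mul]
  push_cast
  field_simp

section LevelSums

variable {N : ℕ} {q ξ : ℕ → ℕ → ℝ} {Φ V : ℝ}

theorem sum_dyadicBranches_of_level_sums
    (hq : ∀ i ∈ Icc 1 N, ∑ j ∈ Icc 1 (2 ^ i), q i j = Φ) :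
    ∑ x ∈ dyadicBranches N, q x.1 x.2 = N * Φ := by
  rw [sum_dyadicBranches, sum_congr rfl hq, sum_const, Nat.card_Icc, nsmul_eq_mul,
    Nat.add_sub_cancel]

variable (hq : ∀ i ∈ Icc 1 N, ∑ j ∈ Icc 1 (2 ^ i), q i j = Φ)
  (hξ : ∀ i ∈ Icc 1 N, ∀ j ∈ Icc 1 (2 ^ i), 0 < ξ i j)
  (hV : ∑ i ∈ Icc 1 N, ∑ j ∈ Icc 1 (2 ^ i), ξ i j = V)
include hq hξ hV

theorem sq_mul_div_le_sum_sq_div_of_level_sums :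
    (N * Φ) ^ 2 / V ≤ ∑ i ∈ Icc 1 N, ∑ j ∈ Icc 1 (2 ^ i), q i j ^ 2 / ξ i j := by
  rw [← sum_dyadicBranches N fun i j => q i j ^ 2 / ξ i j,
    ← sum_dyadicBranches_of_level_sums hq, ← hV, ← sum_dyadicBranches]
  exact sq_sum_div_le_sum_sq_div _ _ (forall_mem_dyadicBranches.2 hξ)

theorem sum_sq_div_eq_iff_of_level_sums :
    ∑ i ∈ Icc 1 N, ∑ j ∈ Icc 1 (2 ^ i), q i j ^ 2 / ξ i j = (N * Φ) ^ 2 / V ↔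
      ∀ i ∈ Icc 1 N, ∀ j ∈ Icc 1 (2 ^ i), q i j / ξ i j = N * Φ / V := by
  rw [← sum_dyadicBranches N fun i j => q i j ^ 2 / ξ i j,
    ← sum_dyadicBranches_of_level_sums hq, ← hV, ← sum_dyadicBranches,
    sum_sq_div_eq_sq_sum_div_iff (dyadicBranches N) (fun x => q x.1 x.2)
      (fun x => ξ x.1 x.2) (forall_mem_dyadicBranches.2 hξ)]
  exact forall_mem_dyadicBranches

end LevelSums

theorem stmt3_general (N : ℕ) (hN : 1 ≤ N) (Λ r0 Φ : ℝ) (hΛ : 1 < Λ) (hr0 : 0 < r0) :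
    let E : (ℕ → ℕ → ℝ) → (ℕ → ℕ → ℝ) → ℝ := fun q ξ =>
      r0 * Φ ^ 2 + ∑ i ∈ Finset.Icc 1 N, ∑ j ∈ Finset.Icc 1 (2 ^ i),
        r0 * (q i j) ^ 2 / ξ i j
    let Feas : (ℕ → ℕ → ℝ) → (ℕ → ℕ → ℝ) → Prop := fun q ξ =>
      (∀ i ∈ Finset.Icc 1 N, ∑ j ∈ Finset.Icc 1 (2 ^ i), q i j = Φ) ∧
      (∀ i ∈ Finset.Icc 1 N, ∀ j ∈ Finset.Icc 1 (2 ^ i), 0 < ξ i j) ∧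
      (∑ i ∈ Finset.Icc 1 N, ∑ j ∈ Finset.Icc 1 (2 ^ i), ξ i j = Λ - 1)
    IsGLB {e : ℝ | ∃ q ξ, Feas q ξ ∧ e = E q ξ}
        (r0 * Φ ^ 2 * (1 + (N : ℝ) ^ 2 / (Λ - 1))) ∧
    (∃ q ξ, Feas q ξ ∧ E q ξ = r0 * Φ ^ 2 * (1 + (N : ℝ) ^ 2 / (Λ - 1))) ∧
    (∀ q ξ, Feas q ξ → E q ξ = r0 * Φ ^ 2 * (1 + (N : ℝ) ^ 2 / (Λ - 1)) →
      ∀ i ∈ Finset.Icc 1 N, ∀ j ∈ Finset.Icc 1 (2 ^ i),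
        q i j / ξ i j = N * Φ / (Λ - 1)) := by
  intro E Feas
  have hE : ∀ q ξ, E q ξ =
      r0 * Φ ^ 2 + r0 * ∑ i ∈ Icc 1 N, ∑ j ∈ Icc 1 (2 ^ i), q i j ^ 2 / ξ i j := by
    simp only [E, mul_sum, mul_div_assoc, implies_true]
  have hopt : r0 * Φ ^ 2 * (1 + (N : ℝ) ^ 2 / (Λ - 1)) =
      r0 * Φ ^ 2 + r0 * ((N * Φ) ^ 2 / (Λ - 1)) := by ring
  have heq : ∀ q ξ, Feas q ξ → (E q ξ = r0 * Φ ^ 2 * (1 + (N : ℝ) ^ 2 / (Λ - 1)) ↔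
      ∀ i ∈ Icc 1 N, ∀ j ∈ Icc 1 (2 ^ i), q i j / ξ i j = N * Φ / (Λ - 1)) :=
    fun q ξ ⟨hq, hξ, hV⟩ => by
      rw [hE, hopt, add_right_inj, mul_right_inj' hr0.ne',
        sum_sq_div_eq_iff_of_level_sums hq hξ hV]
  have hN0 : (N : ℝ) ≠ 0 := by positivity
  have hΛ1 : 0 < Λ - 1 := sub_pos.2 hΛ
  have hwit : Feas (fun i _ => Φ / 2 ^ i) (fun i _ => (Λ - 1) / N / 2 ^ i) := by
    refine ⟨fun i _ => sum_Icc_div_two_pow i Φ, fun i _ j _ => by dsimp only; positivity, ?_⟩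
    rw [← sum_dyadicBranches,
      sum_dyadicBranches_of_level_sums fun i _ => sum_Icc_div_two_pow i _]
    field_simp
  have hmin := (heq _ _ hwit).2 fun i _ j _ => by field_simp
  refine ⟨⟨?_, fun b hb => hb ⟨_, _, hwit, hmin.symm⟩⟩, ⟨_, _, hwit, hmin⟩,
    fun q ξ hf => (heq q ξ hf).1⟩
  rintro _ ⟨q, ξ, ⟨hq, hξ, hV⟩, rfl⟩
  rw [hE, hopt]
  gcongr
  exact sq_mul_div_le_sum_sq_div_of_level_sums hq hξ hV

/-- Problem (Q): minimize the dissipated energy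
`E(q,ξ) = r₀Φ² + ∑_{(i,j)∈B_N} r₀ q_{i,j}²/ξ_{i,j}` over `q` satisfying the
level-flow constraints `∑_{j=1}^{2^i} q_{i,j} = Φ` and positive `ξ` with total
volume `Λ - 1`.  The infimum is `r₀Φ²(1 + N²/(Λ-1))`, it is attained, and any
minimizer satisfies `q_{i,j}/ξ_{i,j} = NΦ/(Λ-1)` on every branch. -/
theorem stmt3 (N : ℕ) (hN : 1 ≤ N) (Λ r0 Φ : ℝ) (hΛ : 1 < Λ) (hr0 : 0 < r0)
    (hΦ : 0 < Φ) :
    let E : (ℕ → ℕ → ℝ) → (ℕ → ℕ → ℝ) → ℝ := fun q ξ =>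
      r0 * Φ ^ 2 + ∑ i ∈ Finset.Icc 1 N, ∑ j ∈ Finset.Icc 1 (2 ^ i),
        r0 * (q i j) ^ 2 / ξ i j
    let Feas : (ℕ → ℕ → ℝ) → (ℕ → ℕ → ℝ) → Prop := fun q ξ =>
      (∀ i ∈ Finset.Icc 1 N, ∑ j ∈ Finset.Icc 1 (2 ^ i), q i j = Φ) ∧
      (∀ i ∈ Finset.Icc 1 N, ∀ j ∈ Finset.Icc 1 (2 ^ i), 0 < ξ i j) ∧
      (∑ i ∈ Finset.Icc 1 N, ∑ j ∈ Finset.Icc 1 (2 ^ i), ξ i j = Λ - 1)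
    IsGLB {e : ℝ | ∃ q ξ, Feas q ξ ∧ e = E q ξ}
        (r0 * Φ ^ 2 * (1 + (N : ℝ) ^ 2 / (Λ - 1))) ∧
    (∃ q ξ, Feas q ξ ∧ E q ξ = r0 * Φ ^ 2 * (1 + (N : ℝ) ^ 2 / (Λ - 1))) ∧
    (∀ q ξ, Feas q ξ → E q ξ = r0 * Φ ^ 2 * (1 + (N : ℝ) ^ 2 / (Λ - 1)) →
      ∀ i ∈ Finset.Icc 1 N, ∀ j ∈ Finset.Icc 1 (2 ^ i),
        q i j / ξ i j = N * Φ / (Λ - 1)) :=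
  stmt3_general N hN Λ r0 Φ hΛ hr0
end

section
/- Let A ∈ ℝ^{n×n} be a symmetric positive semidefinite matrix with kernel equal to the span of e₁ (the first standard basis vector), let u = (1,...,1)ᵀ, and let vᵢ = eᵢ - e_{i+1} for i = 1,...,n-1. Then the matrix M whose rows are (A v₁)ᵀ, ..., (A v_{n-1})ᵀ, uᵀ is invertible, and moreover M e₁ = e_n, so M⁻¹ e_n = e₁. -/
/-!
The first `m` entries of `M x` are the differences of consecutive entries of `A x` (as `A` is
symmetric) and the last one is `∑ xₖ`. So `M x = 0` makes `A x` a constant vector orthogonal to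
`x`, hence `xᵀ A x = 0`; positive semidefiniteness upgrades this to `A x = 0`, so `x` is a
multiple of `e₀` with coordinate sum `0`, i.e. `x = 0`. The same row description gives
`M e₀ = e_last`, since `A e₀ = 0`.
-/

open Matrix

theorem Fin.apply_eq_apply_zero_of_castSucc_eq_succ {α : Type*} {m : ℕ} {y : Fin (m + 1) → α}
    (h : ∀ i : Fin m, y i.castSucc = y i.succ) (j : Fin (m + 1)) : y j = y 0 := by
  induction j using Fin.induction with
  | zero => rfl
  | succ i ih => rw [← h i, ih]

namespace Matrix

section CommRing

variable {R : Type*} [CommRing R] {m : ℕ}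

def diffRowMatrix (A : Matrix (Fin (m + 1)) (Fin (m + 1)) R) :
    Matrix (Fin (m + 1)) (Fin (m + 1)) R :=
  of (Fin.snoc (fun i : Fin m => A *ᵥ (Pi.single i.castSucc 1 - Pi.single i.succ 1))
    fun _ => 1)

theorem diffRowMatrix_mulVec (A : Matrix (Fin (m + 1)) (Fin (m + 1)) R) (x : Fin (m + 1) → R) :
    diffRowMatrix A *ᵥ x =
      Fin.snoc (fun i : Fin m => (Aᵀ *ᵥ x) i.castSucc - (Aᵀ *ᵥ x) i.succ) (∑ k, x k) := by
  ext j
  induction j using Fin.lastCases with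
  | last => simp [diffRowMatrix, mulVec, dotProduct]
  | cast i =>
    have hrow : diffRowMatrix A i.castSucc =
        A *ᵥ (Pi.single i.castSucc 1 - Pi.single i.succ 1) := by
      ext; simp [diffRowMatrix]
    change diffRowMatrix A i.castSucc ⬝ᵥ x = _
    rw [hrow, Fin.snoc_castSucc, dotProduct_comm, dotProduct_mulVec, ← mulVec_transpose,
      dotProduct_sub, dotProduct_single, dotProduct_single, mul_one, mul_one]

theorem diffRowMatrix_mulVec_of_forall_eq {A : Matrix (Fin (m + 1)) (Fin (m + 1)) R}
    {x : Fin (m + 1) → R} (hx : ∀ j, (Aᵀ *ᵥ x) j = (Aᵀ *ᵥ x) 0) :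
    diffRowMatrix A *ᵥ x = Pi.single (Fin.last m) (∑ k, x k) := by
  rw [diffRowMatrix_mulVec]
  ext j
  induction j using Fin.lastCases with
  | last => simp
  | cast i => simp [hx i.castSucc, hx i.succ, (Fin.castSucc_lt_last i).ne]

theorem diffRowMatrix_mulVec_eq_zero_iff {A : Matrix (Fin (m + 1)) (Fin (m + 1)) R}
    {x : Fin (m + 1) → R} :
    diffRowMatrix A *ᵥ x = 0 ↔
      (∀ j, (Aᵀ *ᵥ x) j = (Aᵀ *ᵥ x) 0) ∧ ∑ k, x k = 0 := by
  refine ⟨fun hx => ⟨Fin.apply_eq_apply_zero_of_castSucc_eq_succ fun i => ?_, ?_⟩,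
    fun ⟨hconst, hsum⟩ => ?_⟩
  · simpa [diffRowMatrix_mulVec, sub_eq_zero] using congrFun hx i.castSucc
  · simpa [diffRowMatrix_mulVec] using congrFun hx (Fin.last m)
  · rw [diffRowMatrix_mulVec_of_forall_eq hconst, hsum, Pi.single_zero]

end CommRing

variable {m : ℕ} {A : Matrix (Fin (m + 1)) (Fin (m + 1)) ℝ}

theorem PosSemidef.mulVec_eq_zero_of_diffRowMatrix_mulVec_eq_zero (hA : A.PosSemidef)
    {x : Fin (m + 1) → ℝ} (hx : diffRowMatrix A *ᵥ x = 0) : A *ᵥ x = 0 := by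
  rw [diffRowMatrix_mulVec_eq_zero_iff, (isHermitian_iff_isSymm.mp hA.isHermitian).eq] at hx
  obtain ⟨hconst, hsum⟩ := hx
  rw [← hA.dotProduct_mulVec_zero_iff, star_trivial]
  calc x ⬝ᵥ A *ᵥ x = ∑ k, x k * (A *ᵥ x) 0 :=
        Finset.sum_congr rfl fun k _ => by rw [hconst k]
    _ = 0 := by rw [← Finset.sum_mul, hsum, zero_mul]

theorem PosSemidef.isUnit_diffRowMatrix (hA : A.PosSemidef)
    (hker : ∀ x, A *ᵥ x = 0 → x ∈ ℝ ∙ Pi.single 0 1) : IsUnit (diffRowMatrix A) := by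
  refine mulVec_injective_iff_isUnit.mp fun x y hxy => sub_eq_zero.mp ?_
  have hM : diffRowMatrix A *ᵥ (x - y) = 0 := by rw [mulVec_sub, hxy, sub_self]
  obtain ⟨c, hc⟩ := Submodule.mem_span_singleton.mp
    (hker _ (hA.mulVec_eq_zero_of_diffRowMatrix_mulVec_eq_zero hM))
  have hsum := (diffRowMatrix_mulVec_eq_zero_iff.mp hM).2
  rw [← hc] at hsum ⊢
  have hc₀ : c = 0 := by simpa [Pi.single_apply] using hsum
  rw [hc₀, zero_smul]

end Matrix

/-- If `A` is symmetric positive semidefinite with kernel `Span(e₁)`,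
`u = (1,…,1)ᵀ` and `vᵢ = eᵢ - e_{i+1}`, then the matrix `M` with rows
`(A v₁)ᵀ, …, (A v_{n-1})ᵀ, uᵀ` is invertible, `M e₁ = e_n`, and
`M⁻¹ e_n = e₁`. -/
theorem stmt5 (m : ℕ) (A : Matrix (Fin (m + 1)) (Fin (m + 1)) ℝ)
    (hA : A.PosSemidef)
    (hker : ∀ x : Fin (m + 1) → ℝ, A.mulVec x = 0 ↔
      x ∈ Submodule.span ℝ {(Pi.single 0 1 : Fin (m + 1) → ℝ)}) :
    let M : Matrix (Fin (m + 1)) (Fin (m + 1)) ℝ :=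
      Matrix.of (Fin.snoc
        (fun i : Fin m =>
          A.mulVec (Pi.single i.castSucc 1 - Pi.single i.succ 1))
        (fun _ => (1 : ℝ)))
    IsUnit M ∧
      M.mulVec (Pi.single 0 1) = Pi.single (Fin.last m) 1 ∧
      M⁻¹.mulVec (Pi.single (Fin.last m) 1) = Pi.single 0 1 := by
  change IsUnit (diffRowMatrix A) ∧
    diffRowMatrix A *ᵥ Pi.single 0 1 = Pi.single (Fin.last m) 1 ∧
    (diffRowMatrix A)⁻¹ *ᵥ Pi.single (Fin.last m) 1 = Pi.single 0 1
  have hunit := hA.isUnit_diffRowMatrix fun x => (hker x).mp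
  have hA₀ : Aᵀ *ᵥ Pi.single 0 1 = 0 := by
    rw [(isHermitian_iff_isSymm.mp hA.isHermitian).eq]
    exact (hker _).mpr (Submodule.mem_span_singleton_self _)
  have hMe : diffRowMatrix A *ᵥ Pi.single 0 1 = Pi.single (Fin.last m) 1 := by
    rw [diffRowMatrix_mulVec_of_forall_eq (by simp [hA₀]), Finset.sum_pi_single']
    simp
  refine ⟨hunit, hMe, ?_⟩
  rw [← hMe, mulVec_mulVec, nonsing_inv_mul _ ((isUnit_iff_isUnit_det _).mp hunit), one_mulVec]
end

section
/- Let N ≥ 1, Λ > 1, r₀ > 0, Φ > 0, and suppose the pressure vector p ∈ ℝ^{2^N} satisfies p = π* u_N for some real π* (all outlet pressures equal). Set ξ*_{i,j} = (Λ-1)/(N·2^i) for all (i,j) ∈ B_N. Then the flow vector q* determined by the Poiseuille relations satisfies q*_{i,j} = Φ/2^i for all (i,j), and the dissipated energy equals E(q*,ξ*) = r₀Φ²(1 + N²/(Λ-1)). -/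
/-!
Going up from the outlets, on each level `i` the pressure is an affine function
`p = π* + aᵢ q` of the flow, with one nonnegative effective resistance `aᵢ` for all branches of
the level. At a bifurcation both daughters then see the same resistance `aᵢ₊₁ + r₀/ξᵢ₊₁` between
the common parent pressure and `π*`, so they carry equal flows, half of the parent's, and the
parent obeys the same law with `aᵢ = (aᵢ₊₁ + r₀/ξᵢ₊₁)/2`. Hence `q_{i,j} = Φ/2^i`, and every
level contributes `r₀Φ²N/(Λ-1)` to the energy.
-/

open Finset

structure IsPoiseuilleFlow (N : ℕ) (r0 : ℝ) (ξ q p : ℕ → ℕ → ℝ) : Prop where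
  cons : ∀ i ∈ Icc 0 (N - 1), ∀ j ∈ Icc 1 (2 ^ i),
    q i j = q (i + 1) (2 * j - 1) + q (i + 1) (2 * j)
  pois : ∀ i ∈ Icc 0 (N - 1), ∀ j ∈ Icc 1 (2 ^ i),
    p i j - p (i + 1) (2 * j - 1) = r0 * q (i + 1) (2 * j - 1) / ξ (i + 1) (2 * j - 1) ∧
      p i j - p (i + 1) (2 * j) = r0 * q (i + 1) (2 * j) / ξ (i + 1) (2 * j)

def PressureAffineAt (p q : ℕ → ℕ → ℝ) (i : ℕ) (c a : ℝ) : Prop :=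
  ∀ j ∈ Icc 1 (2 ^ i), p i j = c + a * q i j

theorem symmetric_bifurcation {Q P q₁ q₂ c a R : ℝ} (haR : a + R ≠ 0) (hQ : Q = q₁ + q₂)
    (h₁ : P - (c + a * q₁) = R * q₁) (h₂ : P - (c + a * q₂) = R * q₂) :
    q₁ = Q / 2 ∧ q₂ = Q / 2 ∧ P = c + (a + R) / 2 * Q := by
  have hq : q₁ = q₂ := mul_left_cancel₀ haR (by linarith)
  refine ⟨by linarith, by linarith, ?_⟩
  rw [hQ, ← hq]
  linarith

theorem daughter_mem_Icc {i j : ℕ} (hj : j ∈ Icc 1 (2 ^ i)) :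
    2 * j - 1 ∈ Icc 1 (2 ^ (i + 1)) ∧ 2 * j ∈ Icc 1 (2 ^ (i + 1)) := by
  simp only [mem_Icc, pow_succ] at hj ⊢
  omega

theorem eq_div_pow_of_halving {N : ℕ} {q : ℕ → ℕ → ℝ}
    (hhalf : ∀ i < N, ∀ j ∈ Icc 1 (2 ^ i),
      q (i + 1) (2 * j - 1) = q i j / 2 ∧ q (i + 1) (2 * j) = q i j / 2) :
    ∀ i ≤ N, ∀ j ∈ Icc 1 (2 ^ i), q i j = q 0 1 / 2 ^ i := by
  intro i
  induction i with
  | zero =>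
    intro _ j hj
    obtain rfl : j = 1 := by simp only [pow_zero, Icc_self, mem_singleton] at hj; exact hj
    simp
  | succ i ih =>
    intro hi j hj
    have hparent : (j + 1) / 2 ∈ Icc 1 (2 ^ i) := by
      simp only [mem_Icc, pow_succ] at hj ⊢
      omega
    have hq : q (i + 1) j = q i ((j + 1) / 2) / 2 := by
      obtain ⟨hodd, heven⟩ := hhalf i hi _ hparent
      obtain h | h : 2 * ((j + 1) / 2) - 1 = j ∨ 2 * ((j + 1) / 2) = j := by
        simp only [mem_Icc] at hj
        omega
      · rwa [h] at hodd
      · rwa [h] at heven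
    rw [hq, ih (by omega) _ hparent, pow_succ]
    ring

namespace IsPoiseuilleFlow

variable {N : ℕ} {r0 : ℝ} {s : ℕ → ℝ} {ξ q p : ℕ → ℕ → ℝ}

theorem bifurcation_of_pressureAffineAt (hF : IsPoiseuilleFlow N r0 ξ q p) (hr0 : 0 < r0)
    (hs : ∀ i ∈ Icc 1 N, 0 < s i) (hξ : ∀ i ∈ Icc 1 N, ∀ j ∈ Icc 1 (2 ^ i), ξ i j = s i)
    {i : ℕ} (hi : i < N) {c a : ℝ} (ha : 0 ≤ a) (hlev : PressureAffineAt p q (i + 1) c a)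
    {j : ℕ} (hj : j ∈ Icc 1 (2 ^ i)) :
    q (i + 1) (2 * j - 1) = q i j / 2 ∧ q (i + 1) (2 * j) = q i j / 2 ∧
      p i j = c + (a + r0 / s (i + 1)) / 2 * q i j := by
  have hi' : i ∈ Icc 0 (N - 1) := by simp only [mem_Icc]; omega
  have hi₁ : i + 1 ∈ Icc 1 N := by simp only [mem_Icc]; omega
  obtain ⟨hd₁, hd₂⟩ := daughter_mem_Icc hj
  obtain ⟨hp₁, hp₂⟩ := hF.pois i hi' j hj
  rw [hξ _ hi₁ _ hd₁, hlev _ hd₁, mul_div_right_comm] at hp₁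
  rw [hξ _ hi₁ _ hd₂, hlev _ hd₂, mul_div_right_comm] at hp₂
  have haR : a + r0 / s (i + 1) ≠ 0 := (add_pos_of_nonneg_of_pos ha (div_pos hr0 (hs _ hi₁))).ne'
  exact symmetric_bifurcation haR (hF.cons i hi' j hj) hp₁ hp₂

theorem exists_pressureAffineAt (hF : IsPoiseuilleFlow N r0 ξ q p) (hr0 : 0 < r0)
    (hs : ∀ i ∈ Icc 1 N, 0 < s i) (hξ : ∀ i ∈ Icc 1 N, ∀ j ∈ Icc 1 (2 ^ i), ξ i j = s i)
    {πstar : ℝ} (hout : ∀ j ∈ Icc 1 (2 ^ N), p N j = πstar) :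
    ∀ i ≤ N, ∃ a, 0 ≤ a ∧ PressureAffineAt p q i πstar a := by
  intro i hi
  induction hi using Nat.decreasingInduction with
  | self => exact ⟨0, le_rfl, fun j hj => by rw [hout j hj, zero_mul, add_zero]⟩
  | of_succ i hi ih =>
    obtain ⟨a, ha, hlev⟩ := ih
    refine ⟨(a + r0 / s (i + 1)) / 2, ?_, fun j hj =>
      (hF.bifurcation_of_pressureAffineAt hr0 hs hξ hi ha hlev hj).2.2⟩
    have := div_pos hr0 (hs (i + 1) (by simp only [mem_Icc]; omega))
    positivity

theorem halving (hF : IsPoiseuilleFlow N r0 ξ q p) (hr0 : 0 < r0)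
    (hs : ∀ i ∈ Icc 1 N, 0 < s i) (hξ : ∀ i ∈ Icc 1 N, ∀ j ∈ Icc 1 (2 ^ i), ξ i j = s i)
    {πstar : ℝ} (hout : ∀ j ∈ Icc 1 (2 ^ N), p N j = πstar) :
    ∀ i < N, ∀ j ∈ Icc 1 (2 ^ i),
      q (i + 1) (2 * j - 1) = q i j / 2 ∧ q (i + 1) (2 * j) = q i j / 2 := by
  intro i hi j hj
  obtain ⟨a, ha, hlev⟩ := hF.exists_pressureAffineAt hr0 hs hξ hout (i + 1) hi
  obtain ⟨h₁, h₂, -⟩ := hF.bifurcation_of_pressureAffineAt hr0 hs hξ hi ha hlev hj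
  exact ⟨h₁, h₂⟩

end IsPoiseuilleFlow

theorem sum_Icc_level_energy (i : ℕ) (r0 Φ g M : ℝ) :
    ∑ _j ∈ Icc 1 (2 ^ i), r0 * (Φ / 2 ^ i) ^ 2 / (g / (M * 2 ^ i)) = r0 * Φ ^ 2 * M / g := by
  rw [sum_const, Nat.card_Icc, Nat.add_sub_cancel, nsmul_eq_mul]
  push_cast
  field_simp

theorem stmt7_general (N : ℕ) (Λ r0 Φ πstar : ℝ) (hΛ : 1 < Λ)
    (hr0 : 0 < r0)
    (ξ q p : ℕ → ℕ → ℝ)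
    (hξ : ∀ i ∈ Finset.Icc 1 N, ∀ j ∈ Finset.Icc 1 (2 ^ i),
      ξ i j = (Λ - 1) / (N * 2 ^ i))
    -- the root branch carries the total flow Φ
    (hroot : q 0 1 = Φ)
    -- conservation of flow at each bifurcation
    (hcons : ∀ i ∈ Finset.Icc 0 (N - 1), ∀ j ∈ Finset.Icc 1 (2 ^ i),
      q i j = q (i + 1) (2 * j - 1) + q (i + 1) (2 * j))
    -- Poiseuille's law on each daughter branch
    (hpois : ∀ i ∈ Finset.Icc 0 (N - 1), ∀ j ∈ Finset.Icc 1 (2 ^ i),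
      p i j - p (i + 1) (2 * j - 1)
          = r0 * q (i + 1) (2 * j - 1) / ξ (i + 1) (2 * j - 1) ∧
        p i j - p (i + 1) (2 * j) = r0 * q (i + 1) (2 * j) / ξ (i + 1) (2 * j))
    -- all outlet pressures are equal to π*
    (hout : ∀ j ∈ Finset.Icc 1 (2 ^ N), p N j = πstar) :
    (∀ i ∈ Finset.Icc 1 N, ∀ j ∈ Finset.Icc 1 (2 ^ i), q i j = Φ / 2 ^ i) ∧
      r0 * Φ ^ 2 + ∑ i ∈ Finset.Icc 1 N, ∑ j ∈ Finset.Icc 1 (2 ^ i),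
          r0 * (q i j) ^ 2 / ξ i j
        = r0 * Φ ^ 2 * (1 + (N : ℝ) ^ 2 / (Λ - 1)) := by
  have hξpos : ∀ i ∈ Icc 1 N, 0 < (Λ - 1) / (N * 2 ^ i) := fun i hi => by
    have : (0 : ℝ) < N := by have := mem_Icc.1 hi; exact_mod_cast (by omega : 0 < N)
    have : (0 : ℝ) < Λ - 1 := by linarith
    positivity
  have hhalf := IsPoiseuilleFlow.halving ⟨hcons, hpois⟩ hr0 hξpos hξ hout
  have hflow : ∀ i ∈ Icc 1 N, ∀ j ∈ Icc 1 (2 ^ i), q i j = Φ / 2 ^ i := fun i hi j hj => by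
    rw [← hroot]
    exact eq_div_pow_of_halving hhalf i (mem_Icc.1 hi).2 j hj
  refine ⟨hflow, ?_⟩
  have hlevel : ∀ i ∈ Icc 1 N,
      ∑ j ∈ Icc 1 (2 ^ i), r0 * q i j ^ 2 / ξ i j = r0 * Φ ^ 2 * N / (Λ - 1) := fun i hi => by
    rw [sum_congr rfl fun j hj => by rw [hflow i hi j hj, hξ i hi j hj]]
    exact sum_Icc_level_energy i r0 Φ (Λ - 1) N
  rw [sum_congr rfl hlevel, sum_const, Nat.card_Icc, Nat.add_sub_cancel, nsmul_eq_mul]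
  have : Λ - 1 ≠ 0 := by linarith
  field_simp

/-- If all outlet pressures are equal (`p = π* u_N`) and the geometry is the
symmetric one `ξ*_{i,j} = (Λ-1)/(N·2^i)`, then the Poiseuille flow satisfies
`q*_{i,j} = Φ/2^i` on every branch and the dissipated energy equals
`r₀Φ²(1 + N²/(Λ-1))`.  Branch `(i,j)` (level `i ∈ {1,…,N}`, `1 ≤ j ≤ 2^i`)
has daughters `(i+1, 2j-1)` and `(i+1, 2j)`; the root branch is `(0,1)` and
`p i j` is the pressure at the outlet of branch `(i,j)`. -/
theorem stmt7 (N : ℕ) (hN : 1 ≤ N) (Λ r0 Φ πstar : ℝ) (hΛ : 1 < Λ)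
    (hr0 : 0 < r0) (hΦ : 0 < Φ)
    (ξ q p : ℕ → ℕ → ℝ)
    (hξ : ∀ i ∈ Finset.Icc 1 N, ∀ j ∈ Finset.Icc 1 (2 ^ i),
      ξ i j = (Λ - 1) / (N * 2 ^ i))
    -- the root branch carries the total flow Φ
    (hroot : q 0 1 = Φ)
    -- conservation of flow at each bifurcation
    (hcons : ∀ i ∈ Finset.Icc 0 (N - 1), ∀ j ∈ Finset.Icc 1 (2 ^ i),
      q i j = q (i + 1) (2 * j - 1) + q (i + 1) (2 * j))
    -- Poiseuille's law on each daughter branch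
    (hpois : ∀ i ∈ Finset.Icc 0 (N - 1), ∀ j ∈ Finset.Icc 1 (2 ^ i),
      p i j - p (i + 1) (2 * j - 1)
          = r0 * q (i + 1) (2 * j - 1) / ξ (i + 1) (2 * j - 1) ∧
        p i j - p (i + 1) (2 * j) = r0 * q (i + 1) (2 * j) / ξ (i + 1) (2 * j))
    -- all outlet pressures are equal to π*
    (hout : ∀ j ∈ Finset.Icc 1 (2 ^ N), p N j = πstar) :
    (∀ i ∈ Finset.Icc 1 N, ∀ j ∈ Finset.Icc 1 (2 ^ i), q i j = Φ / 2 ^ i) ∧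
      r0 * Φ ^ 2 + ∑ i ∈ Finset.Icc 1 N, ∑ j ∈ Finset.Icc 1 (2 ^ i),
          r0 * (q i j) ^ 2 / ξ i j
        = r0 * Φ ^ 2 * (1 + (N : ℝ) ^ 2 / (Λ - 1)) :=
  stmt7_general N Λ r0 Φ πstar hΛ hr0 ξ q p hξ hroot hcons hpois hout
end

section
/- Let N ≥ 1, Λ > 1, r₀ > 0, Φ > 0, and suppose at least two outlet pressures differ (there exists j with p_{N,j} ≠ p_{N,j+1}). Then the constrained minimization problem (P₂) — minimizing E(q,ξ) = r₀Φ² + Σ r₀ q_{i,j}²/ξ_{i,j} over pairs (q,ξ) with ξ positive satisfying the volume constraint Σ ξ_{i,j} = Λ-1 and the monotonicity constraint max(ξ_{i+1,2j-1}, ξ_{i+1,2j}) ≤ ξ_{i,j}, and q = M_N(ξ)^{-1} b_N the Poiseuille flow with total inlet flow Φ and outlet pressures p — has infimum r₀Φ²(1 + N²/(Λ-1)), and this infimum is not attained. -/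
/-!
By the energy identity `xᵀ A_N(ξ) x = r₀ ((∑ x)² + ∑_{k,l} Q_{k,l}² / ξ_{k,l})`, where `Q_{k,l}` is
the flow through branch `(k, l)`, Sedrakyan's form of Cauchy–Schwarz applied within each level
(whose flows sum to `Φ`) and then across the `N` levels (whose volumes sum to `Λ - 1`) gives
`E ≥ r₀ Φ² (1 + N² / (Λ - 1))`. Equality forces `Q_{k,l} / ξ_{k,l}` to depend on `k` only, which
makes all outlet pressures `(A_N(ξ) q)_i` equal; as `A_N(ξ) q + p` is constant for the Poiseuille
flow, `p` would be constant.

For the infimum, give volume `a ≈ (Λ - 1) / N` to every branch of the leftmost path and `ε` to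
every other branch. By Thomson's principle, tested against the flow sending all of `Φ` down the
leftmost path, `E ≤ r₀ Φ² (1 + N / a) + O(√(ε E))`, and this bound tends to the infimum as
`ε → 0`.
-/

open Finset Matrix

/-- `ν_{i,j}`: the smallest `k` such that the binary digits of `i` and `j`
agree from position `k` on. -/
noncomputable def nuIdx (i j : ℕ) : ℕ :=
  sInf {k | ∀ l, k ≤ l → i.testBit l = j.testBit l}

/-- The resistance matrix `A_N(ξ)` of the dyadic tree (0-based outlet
indices): `a_{ij} = r₀ (1 + ∑_{(k,l) ∈ Π_{0→(N,i)}(N-ν_{i-1,j-1})} 1/ξ_{k,l})`,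
the ancestor of outlet `i` at level `k` being branch `(k, (i-1)/2^{N-k}+1)`. -/
noncomputable def AN (N : ℕ) (r0 : ℝ) (ξ : ℕ → ℕ → ℝ) :
    Matrix (Fin (2 ^ N)) (Fin (2 ^ N)) ℝ := fun i j =>
  r0 * (1 + ∑ k ∈ Finset.Icc 1 (N - nuIdx i.1 j.1),
    1 / ξ k (i.1 / 2 ^ (N - k) + 1))

/-- The matrix `M_N(ξ)` with rows `(A_N(ξ)vᵢ)ᵀ` for `i = 1,…,2^N - 1`
(`vᵢ = eᵢ - e_{i+1}`) and last row `u_Nᵀ = (1,…,1)`. -/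
noncomputable def MN (N : ℕ) (r0 : ℝ) (ξ : ℕ → ℕ → ℝ) :
    Matrix (Fin (2 ^ N)) (Fin (2 ^ N)) ℝ := fun i j =>
  if h : i.1 + 1 < 2 ^ N then
    (AN N r0 ξ).mulVec (Pi.single i 1 - Pi.single ⟨i.1 + 1, h⟩ 1) j
  else 1

/-- The right-hand side `b_N = (-⟨p,v₁⟩, …, -⟨p,v_{2^N-1}⟩, Φ)ᵀ`. -/
noncomputable def bN (N : ℕ) (p : Fin (2 ^ N) → ℝ) (Φ : ℝ) :
    Fin (2 ^ N) → ℝ := fun i =>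
  if h : i.1 + 1 < 2 ^ N then
    -(p ⬝ᵥ (Pi.single i 1 - Pi.single ⟨i.1 + 1, h⟩ 1))
  else Φ

open Filter Topology

lemma nuIdx_le_iff {i j m : ℕ} : nuIdx i j ≤ m ↔ i / 2 ^ m = j / 2 ^ m := by
  have agree_iff : ∀ m, (∀ l, m ≤ l → i.testBit l = j.testBit l) ↔ i / 2 ^ m = j / 2 ^ m := by
    intro m
    simp only [← Nat.shiftRight_eq_div_pow]
    refine ⟨fun h => Nat.eq_of_testBit_eq fun k => ?_, fun h l hl => ?_⟩
    · simpa [Nat.testBit_shiftRight] using h (m + k) (Nat.le_add_right _ _)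
    · simpa [Nat.testBit_shiftRight, Nat.add_sub_cancel' hl] using
        congrArg (Nat.testBit · (l - m)) h
  have hne : {k | ∀ l, k ≤ l → i.testBit l = j.testBit l}.Nonempty :=
    ⟨max i j, (agree_iff _).2 <| by
      rw [Nat.div_eq_of_lt ((le_max_left i j).trans_lt Nat.lt_two_pow_self),
        Nat.div_eq_of_lt ((le_max_right i j).trans_lt Nat.lt_two_pow_self)]⟩
  refine ⟨fun h => (agree_iff m).1 fun l hl => Nat.sInf_mem hne l (h.trans hl),
    fun h => Nat.sInf_le ((agree_iff m).2 h)⟩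

lemma le_sub_nuIdx_iff {N i j k : ℕ} (hi : i < 2 ^ N) (hj : j < 2 ^ N) (hk : k ≤ N) :
    k ≤ N - nuIdx i j ↔ i / 2 ^ (N - k) = j / 2 ^ (N - k) := by
  have : nuIdx i j ≤ N := nuIdx_le_iff.2 (by rw [Nat.div_eq_of_lt hi, Nat.div_eq_of_lt hj])
  rw [← nuIdx_le_iff]
  omega

/-- Index `l` of the branch `(k, l)` of level `k` through which outlet `i` is fed. -/
def ancestor (N k i : ℕ) : ℕ := i / 2 ^ (N - k) + 1

lemma ancestor_mem_Icc {N k : ℕ} (hk : k ≤ N) (i : Fin (2 ^ N)) :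
    ancestor N k i ∈ Icc 1 (2 ^ k) := by
  have : i.1 / 2 ^ (N - k) < 2 ^ k :=
    Nat.div_lt_of_lt_mul (by rw [← pow_add, Nat.sub_add_cancel hk]; exact i.2)
  exact mem_Icc.2 ⟨Nat.le_add_left _ _, this⟩

lemma ancestor_self (N i : ℕ) : ancestor N N i = i + 1 := by
  simp [ancestor]

noncomputable def branchFlow (N k : ℕ) (x : Fin (2 ^ N) → ℝ) (l : ℕ) : ℝ :=
  ∑ i ∈ univ.filter fun i : Fin (2 ^ N) => ancestor N k i = l, x i

lemma sum_mul_branchFlow {N k : ℕ} (hk : k ≤ N) (F : ℕ → ℝ) (x : Fin (2 ^ N) → ℝ) :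
    ∑ l ∈ Icc 1 (2 ^ k), F l * branchFlow N k x l =
      ∑ i : Fin (2 ^ N), F (ancestor N k i) * x i := by
  rw [← sum_fiberwise_of_maps_to (fun i _ => ancestor_mem_Icc hk i)]
  refine sum_congr rfl fun l _ => ?_
  rw [branchFlow, mul_sum]
  exact sum_congr rfl fun i hi => by rw [(mem_filter.1 hi).2]

lemma sum_branchFlow {N k : ℕ} (hk : k ≤ N) (x : Fin (2 ^ N) → ℝ) :
    ∑ l ∈ Icc 1 (2 ^ k), branchFlow N k x l = ∑ i, x i := by
  simpa using sum_mul_branchFlow hk (fun _ => 1) x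

lemma branchFlow_ancestor_self {N : ℕ} (x : Fin (2 ^ N) → ℝ) (i : Fin (2 ^ N)) :
    branchFlow N N x (ancestor N N i) = x i := by
  rw [branchFlow, sum_eq_single_of_mem i (by simp)]
  intro j hj hji
  simp only [ancestor_self, mem_filter, add_left_inj] at hj
  exact absurd (Fin.ext hj.2) hji

lemma AN_apply {N : ℕ} (r0 : ℝ) (ξ : ℕ → ℕ → ℝ) (i j : Fin (2 ^ N)) :
    AN N r0 ξ i j = r0 * (1 + ∑ k ∈ Icc 1 N,
      if ancestor N k j = ancestor N k i then 1 / ξ k (ancestor N k i) else 0) := by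
  rw [AN, ← sum_filter]
  refine congrArg (fun s => r0 * (1 + s)) (sum_congr (Finset.ext fun k => ?_) fun _ _ => rfl)
  rw [mem_filter, mem_Icc, mem_Icc]
  constructor
  · rintro ⟨hk1, hk⟩
    have hkN : k ≤ N := hk.trans (Nat.sub_le _ _)
    exact ⟨⟨hk1, hkN⟩, by rw [ancestor, ancestor, (le_sub_nuIdx_iff i.2 j.2 hkN).1 hk]⟩
  · rintro ⟨⟨hk1, hkN⟩, h⟩
    exact ⟨hk1, (le_sub_nuIdx_iff i.2 j.2 hkN).2 (by simp only [ancestor] at h; omega)⟩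

lemma AN_transpose {N : ℕ} (r0 : ℝ) (ξ : ℕ → ℕ → ℝ) : (AN N r0 ξ)ᵀ = AN N r0 ξ := by
  ext i j
  simp only [transpose_apply, AN_apply]
  congr 2
  refine sum_congr rfl fun k _ => ?_
  split_ifs with h h' h'
  · rw [h]
  · exact absurd h.symm h'
  · exact absurd h'.symm h
  · rfl

lemma AN_mulVec_apply {N : ℕ} (r0 : ℝ) (ξ : ℕ → ℕ → ℝ) (x : Fin (2 ^ N) → ℝ)
    (i : Fin (2 ^ N)) :
    (AN N r0 ξ *ᵥ x) i = r0 * (∑ j, x j + ∑ k ∈ Icc 1 N,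
      branchFlow N k x (ancestor N k i) / ξ k (ancestor N k i)) := by
  simp only [mulVec, dotProduct, AN_apply, mul_assoc, ← mul_sum, add_mul, one_mul,
    sum_add_distrib, sum_mul, ite_mul, zero_mul]
  rw [sum_comm]
  congr 2
  refine sum_congr rfl fun k _ => ?_
  rw [← sum_filter, branchFlow, sum_div]
  exact sum_congr rfl fun _ _ => by ring

lemma dotProduct_AN_mulVec {N : ℕ} (r0 : ℝ) (ξ : ℕ → ℕ → ℝ) (x : Fin (2 ^ N) → ℝ) :
    x ⬝ᵥ AN N r0 ξ *ᵥ x = r0 * ((∑ i, x i) ^ 2 +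
      ∑ k ∈ Icc 1 N, ∑ l ∈ Icc 1 (2 ^ k), branchFlow N k x l ^ 2 / ξ k l) := by
  have level : ∀ k ∈ Icc 1 N, ∑ l ∈ Icc 1 (2 ^ k), branchFlow N k x l ^ 2 / ξ k l =
      ∑ i : Fin (2 ^ N), branchFlow N k x (ancestor N k i) / ξ k (ancestor N k i) * x i := by
    intro k hk
    rw [← sum_mul_branchFlow (mem_Icc.1 hk).2 (fun l => branchFlow N k x l / ξ k l)]
    exact sum_congr rfl fun l _ => by ring
  rw [sum_congr rfl level, sum_comm, sq, sum_mul, ← sum_add_distrib, mul_sum, dotProduct]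
  refine sum_congr rfl fun i _ => ?_
  rw [AN_mulVec_apply, ← sum_mul]
  ring

lemma isHermitian_AN {N : ℕ} (r0 : ℝ) (ξ : ℕ → ℕ → ℝ) : (AN N r0 ξ).IsHermitian := by
  rw [IsHermitian, conjTranspose_eq_transpose_of_trivial, AN_transpose]

lemma outlet_width_pos {N : ℕ} (hN : 1 ≤ N) {ξ : ℕ → ℕ → ℝ}
    (hξ : ∀ k ∈ Icc 1 N, ∀ l ∈ Icc 1 (2 ^ k), 0 < ξ k l) (i : Fin (2 ^ N)) :
    0 < ξ N (i + 1) := by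
  simpa [ancestor_self] using hξ N (mem_Icc.2 ⟨hN, le_rfl⟩) _ (ancestor_mem_Icc le_rfl i)

lemma sq_div_le_dotProduct_AN_mulVec {N : ℕ} (hN : 1 ≤ N) {r0 : ℝ} (hr0 : 0 ≤ r0)
    {ξ : ℕ → ℕ → ℝ} (hξ : ∀ k ∈ Icc 1 N, ∀ l ∈ Icc 1 (2 ^ k), 0 < ξ k l)
    (x : Fin (2 ^ N) → ℝ) (i : Fin (2 ^ N)) :
    r0 * (x i ^ 2 / ξ N (i + 1)) ≤ x ⬝ᵥ AN N r0 ξ *ᵥ x := by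
  have hNmem : N ∈ Icc 1 N := mem_Icc.2 ⟨hN, le_rfl⟩
  have hterm : ∀ k ∈ Icc 1 N, ∀ l ∈ Icc 1 (2 ^ k), 0 ≤ branchFlow N k x l ^ 2 / ξ k l :=
    fun k hk l hl => div_nonneg (sq_nonneg _) (hξ k hk l hl).le
  have houtlet : x i ^ 2 / ξ N (i + 1) ≤
      ∑ k ∈ Icc 1 N, ∑ l ∈ Icc 1 (2 ^ k), branchFlow N k x l ^ 2 / ξ k l := by
    rw [← ancestor_self, ← branchFlow_ancestor_self x i]
    exact (single_le_sum (hterm N hNmem) (ancestor_mem_Icc le_rfl i)).trans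
      (single_le_sum (f := fun k => ∑ l ∈ Icc 1 (2 ^ k), branchFlow N k x l ^ 2 / ξ k l)
        (fun k hk => sum_nonneg (hterm k hk)) hNmem)
  rw [dotProduct_AN_mulVec]
  exact mul_le_mul_of_nonneg_left (houtlet.trans (le_add_of_nonneg_left (sq_nonneg _))) hr0

lemma posDef_AN {N : ℕ} (hN : 1 ≤ N) {r0 : ℝ} (hr0 : 0 < r0)
    {ξ : ℕ → ℕ → ℝ} (hξ : ∀ k ∈ Icc 1 N, ∀ l ∈ Icc 1 (2 ^ k), 0 < ξ k l) :
    (AN N r0 ξ).PosDef := by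
  refine .of_dotProduct_mulVec_pos (isHermitian_AN r0 ξ) fun x hx => ?_
  obtain ⟨i, hi⟩ := Function.ne_iff.1 hx
  have hxi : x i ≠ 0 := hi
  have hξi := outlet_width_pos hN hξ i
  rw [star_trivial]
  exact lt_of_lt_of_le (by positivity) (sq_div_le_dotProduct_AN_mulVec hN hr0.le hξ x i)

lemma abs_le_sqrt_mul_sqrt_dotProduct_AN_mulVec {N : ℕ} (hN : 1 ≤ N) {r0 : ℝ} (hr0 : 0 < r0)
    {ξ : ℕ → ℕ → ℝ} (hξ : ∀ k ∈ Icc 1 N, ∀ l ∈ Icc 1 (2 ^ k), 0 < ξ k l)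
    (x : Fin (2 ^ N) → ℝ) (i : Fin (2 ^ N)) :
    |x i| ≤ √(ξ N (i + 1) / r0) * √(x ⬝ᵥ AN N r0 ξ *ᵥ x) := by
  have hξi := outlet_width_pos hN hξ i
  have henergy := sq_div_le_dotProduct_AN_mulVec hN hr0.le hξ x i
  rw [mul_div_assoc', div_le_iff₀ hξi] at henergy
  rw [← Real.sqrt_mul (by positivity), ← Real.sqrt_sq_eq_abs]
  refine Real.sqrt_le_sqrt ?_
  rw [div_mul_eq_mul_div, le_div_iff₀ hr0]
  linarith

/-- Thomson's principle. -/
theorem dotProduct_mulVec_le_of_mulVec_add_const {ι : Type*} [Fintype ι]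
    {A : Matrix ι ι ℝ} (hA : A.PosSemidef) {p q y : ι → ℝ} {c : ℝ}
    (hq : ∀ i, (A *ᵥ q) i + p i = c) (hy : ∑ i, y i = ∑ i, q i) :
    q ⬝ᵥ A *ᵥ q ≤ y ⬝ᵥ A *ᵥ y + 2 * (p ⬝ᵥ y - p ⬝ᵥ q) := by
  set d := y - q
  have hd : ∑ i, d i = 0 := by simp [d, sum_sub_distrib, hy]
  have hdAq : d ⬝ᵥ A *ᵥ q = -(p ⬝ᵥ d) := by
    have : A *ᵥ q = c • 1 - p := funext fun i => by simp [← hq i]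
    rw [this, dotProduct_sub, dotProduct_smul, dotProduct_one, hd, dotProduct_comm]
    simp
  have hsymm : q ⬝ᵥ A *ᵥ d = d ⬝ᵥ A *ᵥ q := by
    rw [dotProduct_mulVec, ← mulVec_transpose, dotProduct_comm,
      ← conjTranspose_eq_transpose_of_trivial, hA.1.eq]
  have hdAd : 0 ≤ d ⬝ᵥ A *ᵥ d := by simpa using hA.dotProduct_mulVec_nonneg d
  have hexpand : y ⬝ᵥ A *ᵥ y = q ⬝ᵥ A *ᵥ q + 2 * (d ⬝ᵥ A *ᵥ q) + d ⬝ᵥ A *ᵥ d := by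
    rw [show y = q + d by simp [d], mulVec_add, add_dotProduct, dotProduct_add,
      dotProduct_add, hsymm]
    ring
  rw [hexpand, hdAq, show p ⬝ᵥ y - p ⬝ᵥ q = p ⬝ᵥ d by simp [d, dotProduct_sub]]
  linarith

theorem Fin.apply_eq_apply_of_forall_succ {α : Type*} {n : ℕ} {f : Fin n → α}
    (h : ∀ (i : Fin n) (hi : i.1 + 1 < n), f i = f ⟨i.1 + 1, hi⟩) (i j : Fin n) :
    f i = f j := by
  have hn : 0 < n := i.pos
  have from_zero : ∀ m (hm : m < n), f ⟨m, hm⟩ = f ⟨0, hn⟩ := by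
    intro m
    induction m with
    | zero => exact fun _ => rfl
    | succ m ih => exact fun hm => (h ⟨m, by omega⟩ hm).symm.trans (ih _)
  exact (from_zero i i.2).trans (from_zero j j.2).symm

section Poiseuille

variable {N : ℕ} {r0 Φ : ℝ} {ξ : ℕ → ℕ → ℝ} {p x : Fin (2 ^ N) → ℝ}

lemma sum_eq_of_MN_mulVec_eq_bN (hx : MN N r0 ξ *ᵥ x = bN N p Φ) : ∑ i, x i = Φ := by
  have hlast : ¬ 2 ^ N - 1 + 1 < 2 ^ N := by omega
  have := congrFun hx ⟨2 ^ N - 1, by have := Nat.one_le_two_pow (n := N); omega⟩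
  simpa [mulVec, dotProduct, MN, bN, hlast] using this

lemma MN_mulVec_apply_of_lt (x : Fin (2 ^ N) → ℝ) (i : Fin (2 ^ N)) (hi : i.1 + 1 < 2 ^ N) :
    (MN N r0 ξ *ᵥ x) i = (AN N r0 ξ *ᵥ x) i - (AN N r0 ξ *ᵥ x) ⟨i + 1, hi⟩ := by
  have row : (MN N r0 ξ *ᵥ x) i =
      (AN N r0 ξ *ᵥ (Pi.single i 1 - Pi.single ⟨i + 1, hi⟩ 1)) ⬝ᵥ x := by
    simp only [mulVec, MN, dif_pos hi]
    rfl
  rw [row, dotProduct_comm, dotProduct_mulVec, ← mulVec_transpose, AN_transpose,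
    dotProduct_sub, dotProduct_single, dotProduct_single, mul_one, mul_one]

lemma AN_mulVec_add_eq_of_MN_mulVec_eq_bN (hx : MN N r0 ξ *ᵥ x = bN N p Φ)
    (i j : Fin (2 ^ N)) : (AN N r0 ξ *ᵥ x) i + p i = (AN N r0 ξ *ᵥ x) j + p j := by
  refine Fin.apply_eq_apply_of_forall_succ (f := fun i => (AN N r0 ξ *ᵥ x) i + p i)
    (fun i hi => ?_) i j
  have row := congrFun hx i
  rw [MN_mulVec_apply_of_lt x i hi] at row
  simp only [bN, dif_pos hi, dotProduct_sub, dotProduct_single, mul_one] at row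
  linarith

lemma isUnit_det_MN (hN : 1 ≤ N) (hr0 : 0 < r0)
    (hξ : ∀ k ∈ Icc 1 N, ∀ l ∈ Icc 1 (2 ^ k), 0 < ξ k l) : IsUnit (MN N r0 ξ).det := by
  refine isUnit_iff_ne_zero.2 fun hdet => ?_
  obtain ⟨v, hv0, hv⟩ := exists_mulVec_eq_zero_iff.2 hdet
  have hvb : MN N r0 ξ *ᵥ v = bN N 0 0 := by
    rw [hv]; ext i; simp [bN]
  have i₀ : Fin (2 ^ N) := ⟨0, Nat.two_pow_pos N⟩
  have hzero : v ⬝ᵥ AN N r0 ξ *ᵥ v = 0 := by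
    have hconst : AN N r0 ξ *ᵥ v = (AN N r0 ξ *ᵥ v) i₀ • 1 := funext fun i => by
      simpa using AN_mulVec_add_eq_of_MN_mulVec_eq_bN hvb i i₀
    rw [hconst, dotProduct_smul, dotProduct_one, sum_eq_of_MN_mulVec_eq_bN hvb, smul_zero]
  have := (posDef_AN hN hr0 hξ).dotProduct_mulVec_pos hv0
  rw [star_trivial, hzero] at this
  exact this.false

end Poiseuille

noncomputable def poiseuilleFlow (N : ℕ) (r0 : ℝ) (p : Fin (2 ^ N) → ℝ) (Φ : ℝ)
    (ξ : ℕ → ℕ → ℝ) : Fin (2 ^ N) → ℝ :=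
  (MN N r0 ξ)⁻¹ *ᵥ bN N p Φ

noncomputable def dissipation (N : ℕ) (r0 : ℝ) (p : Fin (2 ^ N) → ℝ) (Φ : ℝ)
    (ξ : ℕ → ℕ → ℝ) : ℝ :=
  poiseuilleFlow N r0 p Φ ξ ⬝ᵥ AN N r0 ξ *ᵥ poiseuilleFlow N r0 p Φ ξ

lemma MN_mulVec_poiseuilleFlow {N : ℕ} (hN : 1 ≤ N) {r0 : ℝ} (hr0 : 0 < r0)
    {ξ : ℕ → ℕ → ℝ} (hξ : ∀ k ∈ Icc 1 N, ∀ l ∈ Icc 1 (2 ^ k), 0 < ξ k l)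
    (p : Fin (2 ^ N) → ℝ) (Φ : ℝ) :
    MN N r0 ξ *ᵥ poiseuilleFlow N r0 p Φ ξ = bN N p Φ := by
  rw [poiseuilleFlow, mulVec_mulVec, mul_nonsing_inv _ (isUnit_det_MN hN hr0 hξ), one_mulVec]

/-- Equality case of `Finset.sq_sum_div_le_sum_sq_div`. -/
theorem Finset.eq_mul_of_sum_sq_div_eq {ι : Type*} {s : Finset ι} {f g : ι → ℝ}
    (hg : ∀ i ∈ s, 0 < g i)
    (h : ∑ i ∈ s, f i ^ 2 / g i = (∑ i ∈ s, f i) ^ 2 / ∑ i ∈ s, g i) :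
    ∀ i ∈ s, f i = g i * ((∑ i ∈ s, f i) / ∑ i ∈ s, g i) := by
  intro i hi
  set F := ∑ i ∈ s, f i
  set G := ∑ i ∈ s, g i
  have hG : 0 < G := sum_pos hg ⟨i, hi⟩
  -- the defect in Sedrakyan's inequality is the `g`-weighted variance of `f / g`
  have hvariance : ∑ j ∈ s, g j * (f j / g j - F / G) ^ 2 =
      ∑ j ∈ s, f j ^ 2 / g j - F ^ 2 / G := by
    have hterm : ∀ j ∈ s, g j * (f j / g j - F / G) ^ 2 =
        f j ^ 2 / g j - 2 * (F / G) * f j + (F / G) ^ 2 * g j := by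
      intro j hj
      have := (hg j hj).ne'
      field_simp
      ring
    rw [sum_congr rfl hterm, sum_add_distrib, sum_sub_distrib, ← mul_sum, ← mul_sum]
    field_simp
    ring
  have hzero := (sum_eq_zero_iff_of_nonneg fun j hj => mul_nonneg (hg j hj).le (sq_nonneg _)).1
    (by rw [hvariance, h, sub_self]) i hi
  have hgi := (hg i hi).ne'
  rw [mul_eq_zero, sq_eq_zero_iff, sub_eq_zero, div_eq_iff hgi] at hzero
  rcases hzero with h0 | h0
  · exact absurd h0 hgi
  · rw [h0, mul_comm]

def levelVolume (ξ : ℕ → ℕ → ℝ) (k : ℕ) : ℝ := ∑ l ∈ Icc 1 (2 ^ k), ξ k l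

section LowerBound

variable {N : ℕ} {r0 : ℝ} {ξ : ℕ → ℕ → ℝ}

lemma levelVolume_pos {k : ℕ} (hξ : ∀ l ∈ Icc 1 (2 ^ k), 0 < ξ k l) : 0 < levelVolume ξ k :=
  sum_pos hξ ⟨1, mem_Icc.2 ⟨le_rfl, Nat.one_le_two_pow⟩⟩

lemma sq_sum_div_levelVolume_le {k : ℕ} (hk : k ≤ N) (hξ : ∀ l ∈ Icc 1 (2 ^ k), 0 < ξ k l)
    (x : Fin (2 ^ N) → ℝ) :
    (∑ i, x i) ^ 2 / levelVolume ξ k ≤ ∑ l ∈ Icc 1 (2 ^ k), branchFlow N k x l ^ 2 / ξ k l := by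
  have := sq_sum_div_le_sum_sq_div _ (branchFlow N k x) hξ
  rwa [sum_branchFlow hk] at this

lemma sq_div_volume_le_sum_div_levelVolume (hξ : ∀ k ∈ Icc 1 N, ∀ l ∈ Icc 1 (2 ^ k), 0 < ξ k l)
    (Φ : ℝ) :
    Φ ^ 2 * ((N : ℝ) ^ 2 / ∑ k ∈ Icc 1 N, levelVolume ξ k) ≤
      ∑ k ∈ Icc 1 N, Φ ^ 2 / levelVolume ξ k := by
  have := sq_sum_div_le_sum_sq_div (Icc 1 N) (fun _ => (1 : ℝ))
    fun k hk => levelVolume_pos (hξ k hk)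
  simp only [sum_const, Nat.card_Icc, add_tsub_cancel_right, nsmul_eq_mul, mul_one,
    one_pow] at this
  simp_rw [div_eq_mul_one_div (Φ ^ 2), ← mul_sum]
  exact mul_le_mul_of_nonneg_left this (sq_nonneg Φ)

lemma le_dotProduct_AN_mulVec (hr0 : 0 ≤ r0)
    (hξ : ∀ k ∈ Icc 1 N, ∀ l ∈ Icc 1 (2 ^ k), 0 < ξ k l) (x : Fin (2 ^ N) → ℝ) :
    r0 * (∑ i, x i) ^ 2 * (1 + (N : ℝ) ^ 2 / ∑ k ∈ Icc 1 N, levelVolume ξ k) ≤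
      x ⬝ᵥ AN N r0 ξ *ᵥ x := by
  rw [dotProduct_AN_mulVec, mul_assoc, mul_add, mul_one]
  gcongr
  exact (sq_div_volume_le_sum_div_levelVolume hξ _).trans
    (sum_le_sum fun k hk => sq_sum_div_levelVolume_le (mem_Icc.1 hk).2 (hξ k hk) x)

lemma AN_mulVec_eq_of_dotProduct_AN_mulVec_eq (hr0 : 0 < r0)
    (hξ : ∀ k ∈ Icc 1 N, ∀ l ∈ Icc 1 (2 ^ k), 0 < ξ k l) {x : Fin (2 ^ N) → ℝ}
    (heq : x ⬝ᵥ AN N r0 ξ *ᵥ x =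
      r0 * (∑ i, x i) ^ 2 * (1 + (N : ℝ) ^ 2 / ∑ k ∈ Icc 1 N, levelVolume ξ k))
    (i j : Fin (2 ^ N)) : (AN N r0 ξ *ᵥ x) i = (AN N r0 ξ *ᵥ x) j := by
  set Φ := ∑ i, x i
  have hlevel : ∀ k ∈ Icc 1 N, Φ ^ 2 / levelVolume ξ k =
      ∑ l ∈ Icc 1 (2 ^ k), branchFlow N k x l ^ 2 / ξ k l := by
    refine (sum_eq_sum_iff_of_le fun k hk =>
      sq_sum_div_levelVolume_le (mem_Icc.1 hk).2 (hξ k hk) x).1 (le_antisymm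
        (sum_le_sum fun k hk => sq_sum_div_levelVolume_le (mem_Icc.1 hk).2 (hξ k hk) x) ?_)
    have := sq_div_volume_le_sum_div_levelVolume hξ Φ
    rw [dotProduct_AN_mulVec] at heq
    nlinarith
  have hflow : ∀ k ∈ Icc 1 N, ∀ l ∈ Icc 1 (2 ^ k),
      branchFlow N k x l / ξ k l = Φ / levelVolume ξ k := by
    intro k hk l hl
    have := Finset.eq_mul_of_sum_sq_div_eq (hξ k hk)
      (by rw [sum_branchFlow (mem_Icc.1 hk).2]; exact (hlevel k hk).symm) l hl
    rw [sum_branchFlow (mem_Icc.1 hk).2] at this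
    rw [this, mul_div_cancel_left₀ _ (hξ k hk l hl).ne']
    rfl
  have hrow : ∀ i, (AN N r0 ξ *ᵥ x) i = r0 * (Φ + ∑ k ∈ Icc 1 N, Φ / levelVolume ξ k) :=
    fun i => by
      rw [AN_mulVec_apply]
      congr 2
      exact sum_congr rfl fun k hk => hflow k hk _ (ancestor_mem_Icc (mem_Icc.1 hk).2 i)
  rw [hrow, hrow]

end LowerBound

def Admissible (N : ℕ) (Λ : ℝ) (ξ : ℕ → ℕ → ℝ) : Prop :=
  (∀ i ∈ Finset.Icc 1 N, ∀ j ∈ Finset.Icc 1 (2 ^ i), 0 < ξ i j) ∧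
  (∑ i ∈ Finset.Icc 1 N, ∑ j ∈ Finset.Icc 1 (2 ^ i), ξ i j = Λ - 1) ∧
  (∀ i ∈ Finset.Icc 1 (N - 1), ∀ j ∈ Finset.Icc 1 (2 ^ i),
    max (ξ (i + 1) (2 * j - 1)) (ξ (i + 1) (2 * j)) ≤ ξ i j)

section Admissible

variable {N : ℕ} {Λ r0 Φ : ℝ} {p : Fin (2 ^ N) → ℝ} {ξ : ℕ → ℕ → ℝ}

lemma le_dissipation (hN : 1 ≤ N) (hr0 : 0 < r0) (hξ : Admissible N Λ ξ) :
    r0 * Φ ^ 2 * (1 + (N : ℝ) ^ 2 / (Λ - 1)) ≤ dissipation N r0 p Φ ξ := by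
  obtain ⟨hpos, hvol, -⟩ := hξ
  have hV : ∑ k ∈ Icc 1 N, levelVolume ξ k = Λ - 1 := hvol
  have := le_dotProduct_AN_mulVec hr0.le hpos (poiseuilleFlow N r0 p Φ ξ)
  rwa [sum_eq_of_MN_mulVec_eq_bN (MN_mulVec_poiseuilleFlow hN hr0 hpos p Φ), hV] at this

lemma dissipation_ne (hN : 1 ≤ N) (hr0 : 0 < r0) (hξ : Admissible N Λ ξ)
    (hp : ∃ j : Fin (2 ^ N), ∃ h : j.1 + 1 < 2 ^ N, p j ≠ p ⟨j.1 + 1, h⟩) :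
    dissipation N r0 p Φ ξ ≠ r0 * Φ ^ 2 * (1 + (N : ℝ) ^ 2 / (Λ - 1)) := by
  obtain ⟨hpos, hvol, -⟩ := hξ
  obtain ⟨j, hj, hpj⟩ := hp
  intro heq
  have hV : ∑ k ∈ Icc 1 N, levelVolume ξ k = Λ - 1 := hvol
  have hq := MN_mulVec_poiseuilleFlow hN hr0 hpos p Φ
  have hA := AN_mulVec_eq_of_dotProduct_AN_mulVec_eq hr0 hpos
    (by rw [sum_eq_of_MN_mulVec_eq_bN hq, hV]; exact heq) j ⟨j + 1, hj⟩
  have hpot := AN_mulVec_add_eq_of_MN_mulVec_eq_bN hq j ⟨j + 1, hj⟩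
  exact hpj (by linarith)

end Admissible

lemma le_sq_sqrt_add_of_le_add_mul_sqrt {B D E : ℝ} (hB : 0 ≤ B) (hD : 0 ≤ D)
    (h : E ≤ B + D * √E) : E ≤ (√B + D) ^ 2 := by
  rcases lt_or_ge E 0 with hE | hE
  · exact hE.le.trans (sq_nonneg _)
  have hsqrt : √E ≤ √B + D := by
    by_contra! hlt
    have hB' := Real.sq_sqrt hB
    have hE' := Real.sq_sqrt hE
    nlinarith [Real.sqrt_nonneg B, Real.sqrt_nonneg E]
  calc E = √E ^ 2 := (Real.sq_sqrt hE).symm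
    _ ≤ (√B + D) ^ 2 := pow_le_pow_left₀ (Real.sqrt_nonneg E) hsqrt 2

def concentrated (a ε : ℝ) : ℕ → ℕ → ℝ := fun _ l => if l = 1 then a else ε

section Concentrated

variable {N : ℕ} {a ε : ℝ}

lemma levelVolume_concentrated (k : ℕ) :
    levelVolume (concentrated a ε) k = a + ((2 : ℝ) ^ k - 1) * ε := by
  have h1 : 1 ∈ Icc 1 (2 ^ k) := mem_Icc.2 ⟨le_rfl, Nat.one_le_two_pow⟩
  have off_path : ∀ l ∈ (Icc 1 (2 ^ k)).erase 1, concentrated a ε k l = ε :=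
    fun l hl => if_neg (ne_of_mem_erase hl)
  rw [levelVolume, ← add_sum_erase _ _ h1, sum_congr rfl off_path, concentrated, if_pos rfl,
    sum_const, card_erase_of_mem h1,
    Nat.card_Icc, nsmul_eq_mul, Nat.cast_sub (by simpa using Nat.one_le_two_pow)]
  push_cast
  ring

lemma concentrated_pos (ha : 0 < a) (hε : 0 < ε) (k l : ℕ) : 0 < concentrated a ε k l := by
  unfold concentrated; split_ifs <;> assumption

lemma admissible_concentrated (hε : 0 < ε) (hεa : ε ≤ a) {Λ : ℝ}
    (hvol : N * a + ε * ∑ k ∈ Icc 1 N, ((2 : ℝ) ^ k - 1) = Λ - 1) :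
    Admissible N Λ (concentrated a ε) := by
  refine ⟨fun k _ l _ => ?_, ?_, fun k _ l hl => ?_⟩
  · exact concentrated_pos (hε.trans_le hεa) hε k l
  · change ∑ k ∈ Icc 1 N, levelVolume (concentrated a ε) k = Λ - 1
    simp only [levelVolume_concentrated, sum_add_distrib, sum_const, Nat.card_Icc,
      add_tsub_cancel_right, nsmul_eq_mul, ← sum_mul]
    linarith
  · have : 1 ≤ l := (mem_Icc.1 hl).1
    unfold concentrated
    split_ifs <;> first | omega | simp [hεa]

lemma AN_concentrated_apply_zero (r0 : ℝ) :
    AN N r0 (concentrated a ε) ⟨0, Nat.two_pow_pos N⟩ ⟨0, Nat.two_pow_pos N⟩ =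
      r0 * (1 + N / a) := by
  simp [AN_apply, ancestor, concentrated, div_eq_mul_inv]

lemma dissipation_concentrated_le (hN : 1 ≤ N) {r0 : ℝ} (hr0 : 0 < r0) (hε : 0 < ε)
    (hεa : ε ≤ a) (p : Fin (2 ^ N) → ℝ) (Φ : ℝ) :
    dissipation N r0 p Φ (concentrated a ε) ≤
      (√(r0 * Φ ^ 2 * (1 + N / a)) +
        (∑ i, 2 * |p i - p ⟨0, Nat.two_pow_pos N⟩|) * √(ε / r0)) ^ 2 := by
  have ha : 0 < a := hε.trans_le hεa
  unfold dissipation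
  set ξ := concentrated a ε
  have hpos : ∀ k ∈ Icc 1 N, ∀ l ∈ Icc 1 (2 ^ k), 0 < ξ k l :=
    fun k _ l _ => concentrated_pos ha hε k l
  set i₀ : Fin (2 ^ N) := ⟨0, Nat.two_pow_pos N⟩
  set q := poiseuilleFlow N r0 p Φ ξ
  set E := q ⬝ᵥ AN N r0 ξ *ᵥ q
  have hq := MN_mulVec_poiseuilleFlow hN hr0 hpos p Φ
  have hsum : ∑ i, q i = Φ := sum_eq_of_MN_mulVec_eq_bN hq
  -- test flow: all of `Φ` to outlet `0`, down the leftmost path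
  have hthomson : E ≤ Pi.single i₀ Φ ⬝ᵥ AN N r0 ξ *ᵥ Pi.single i₀ Φ +
      2 * (p ⬝ᵥ Pi.single i₀ Φ - p ⬝ᵥ q) :=
    dotProduct_mulVec_le_of_mulVec_add_const (posDef_AN hN hr0 hpos).posSemidef
      (fun i => AN_mulVec_add_eq_of_MN_mulVec_eq_bN hq i i₀) (by simp [hsum])
  have hpath : Pi.single i₀ Φ ⬝ᵥ AN N r0 ξ *ᵥ Pi.single i₀ Φ = r0 * Φ ^ 2 * (1 + N / a) := by
    have hroot : AN N r0 ξ i₀ i₀ = r0 * (1 + N / a) := AN_concentrated_apply_zero r0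
    simp only [mulVec_single, single_dotProduct, Pi.smul_apply, col_apply, hroot,
      op_smul_eq_mul]
    ring
  have hpot : p ⬝ᵥ Pi.single i₀ Φ - p ⬝ᵥ q = ∑ i, (p i₀ - p i) * q i := by
    rw [dotProduct_single, ← hsum, mul_sum, dotProduct, ← sum_sub_distrib]
    exact sum_congr rfl fun i _ => by ring
  have hleak : ∀ i, (p i₀ - p i) * q i ≤ |p i - p i₀| * (√(ε / r0) * √E) := by
    intro i
    rcases eq_or_ne i i₀ with rfl | hi
    · simp only [sub_self, zero_mul, abs_zero, le_refl]
    have hξi : ξ N (i + 1) = ε := if_neg fun h => hi (Fin.ext (by simp only [i₀]; omega))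
    have hqi : |q i| ≤ √(ε / r0) * √E := by
      simpa only [hξi] using abs_le_sqrt_mul_sqrt_dotProduct_AN_mulVec hN hr0 hpos q i
    calc (p i₀ - p i) * q i ≤ |p i - p i₀| * |q i| := by
          rw [abs_sub_comm, ← abs_mul]; exact le_abs_self _
      _ ≤ |p i - p i₀| * (√(ε / r0) * √E) := mul_le_mul_of_nonneg_left hqi (abs_nonneg _)
  refine le_sq_sqrt_add_of_le_add_mul_sqrt (by positivity) (by positivity) ?_
  calc E ≤ r0 * Φ ^ 2 * (1 + N / a) + 2 * ∑ i, (p i₀ - p i) * q i := by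
        rwa [hpath, hpot] at hthomson
    _ ≤ r0 * Φ ^ 2 * (1 + N / a) + 2 * ∑ i, |p i - p i₀| * (√(ε / r0) * √E) := by
        have := sum_le_sum fun i (_ : i ∈ univ) => hleak i
        linarith
    _ = _ := by rw [mul_sum, sum_mul, sum_mul]; congr 1; exact sum_congr rfl fun _ _ => by ring

end Concentrated

section Infimum

variable {N : ℕ} {Λ : ℝ}

/-- Makes the total volume of `concentrated (leftmostVolume N Λ ε) ε` equal to `Λ - 1`. -/
noncomputable def leftmostVolume (N : ℕ) (Λ ε : ℝ) : ℝ :=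
  (Λ - 1 - ε * ∑ k ∈ Icc 1 N, ((2 : ℝ) ^ k - 1)) / N

lemma leftmostVolume_zero : leftmostVolume N Λ 0 = (Λ - 1) / N := by
  simp [leftmostVolume]

lemma eventually_pos_lt_leftmostVolume (hN : 1 ≤ N) (hΛ : 1 < Λ) :
    ∀ᶠ ε in 𝓝[>] 0, 0 < ε ∧ ε < leftmostVolume N Λ ε := by
  have hcont : Continuous fun ε => leftmostVolume N Λ ε - ε := by
    unfold leftmostVolume; fun_prop
  have h0 : 0 < leftmostVolume N Λ 0 - 0 := by
    rw [leftmostVolume_zero, sub_zero]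
    exact div_pos (by linarith) (by exact_mod_cast hN)
  filter_upwards [self_mem_nhdsWithin,
    nhdsWithin_le_nhds ((hcont.tendsto 0).eventually (lt_mem_nhds h0))] with ε hε hεa
  exact ⟨hε, by linarith⟩

lemma admissible_concentrated_leftmostVolume (hN : 1 ≤ N) {ε : ℝ} (hε : 0 < ε)
    (hεa : ε ≤ leftmostVolume N Λ ε) :
    Admissible N Λ (concentrated (leftmostVolume N Λ ε) ε) := by
  refine admissible_concentrated hε hεa ?_
  have : (N : ℝ) ≠ 0 := by positivity
  rw [leftmostVolume, mul_div_cancel₀ _ this]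
  ring

lemma tendsto_dissipation_concentrated (hN : 1 ≤ N) (hΛ : 1 < Λ) {r0 : ℝ} (hr0 : 0 < r0)
    (p : Fin (2 ^ N) → ℝ) (Φ : ℝ) :
    Tendsto (fun ε => dissipation N r0 p Φ (concentrated (leftmostVolume N Λ ε) ε)) (𝓝[>] 0)
      (𝓝 (r0 * Φ ^ 2 * (1 + (N : ℝ) ^ 2 / (Λ - 1)))) := by
  set K := ∑ i, 2 * |p i - p ⟨0, Nat.two_pow_pos N⟩|
  set bound := fun ε =>
    (√(r0 * Φ ^ 2 * (1 + N / leftmostVolume N Λ ε)) + K * √(ε / r0)) ^ 2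
  have hbound : Tendsto bound (𝓝[>] 0) (𝓝 (r0 * Φ ^ 2 * (1 + (N : ℝ) ^ 2 / (Λ - 1)))) := by
    have h0 : leftmostVolume N Λ 0 ≠ 0 := by
      rw [leftmostVolume_zero]
      exact div_ne_zero (by linarith) (by positivity)
    have hcont : ContinuousAt bound 0 := by
      simp only [bound, leftmostVolume] at h0 ⊢
      fun_prop (disch := exact h0)
    have hval : bound 0 = r0 * Φ ^ 2 * (1 + (N : ℝ) ^ 2 / (Λ - 1)) := by
      simp only [bound, leftmostVolume_zero, zero_div, Real.sqrt_zero, mul_zero, add_zero]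
      rw [Real.sq_sqrt (by positivity), div_div_eq_mul_div, ← sq]
    exact hval ▸ hcont.tendsto.mono_left nhdsWithin_le_nhds
  refine tendsto_of_tendsto_of_tendsto_of_le_of_le' tendsto_const_nhds hbound ?_ ?_
  · filter_upwards [eventually_pos_lt_leftmostVolume hN hΛ] with ε ⟨hε, hεa⟩
    exact le_dissipation hN hr0 (admissible_concentrated_leftmostVolume hN hε hεa.le)
  · filter_upwards [eventually_pos_lt_leftmostVolume hN hΛ] with ε ⟨hε, hεa⟩
    exact dissipation_concentrated_le hN hr0 hε hεa.le p Φ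

end Infimum

theorem stmt9_general (N : ℕ) (hN : 1 ≤ N) (Λ r0 Φ : ℝ) (hΛ : 1 < Λ) (hr0 : 0 < r0)
    (p : Fin (2 ^ N) → ℝ)
    (hp : ∃ j : Fin (2 ^ N), ∃ h : j.1 + 1 < 2 ^ N, p j ≠ p ⟨j.1 + 1, h⟩) :
    let Feas : (ℕ → ℕ → ℝ) → Prop := fun ξ =>
      (∀ i ∈ Finset.Icc 1 N, ∀ j ∈ Finset.Icc 1 (2 ^ i), 0 < ξ i j) ∧
      (∑ i ∈ Finset.Icc 1 N, ∑ j ∈ Finset.Icc 1 (2 ^ i), ξ i j = Λ - 1) ∧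
      (∀ i ∈ Finset.Icc 1 (N - 1), ∀ j ∈ Finset.Icc 1 (2 ^ i),
        max (ξ (i + 1) (2 * j - 1)) (ξ (i + 1) (2 * j)) ≤ ξ i j)
    let E : (ℕ → ℕ → ℝ) → ℝ := fun ξ =>
      (MN N r0 ξ)⁻¹.mulVec (bN N p Φ) ⬝ᵥ
        (AN N r0 ξ).mulVec ((MN N r0 ξ)⁻¹.mulVec (bN N p Φ))
    IsGLB {e : ℝ | ∃ ξ, Feas ξ ∧ e = E ξ}
        (r0 * Φ ^ 2 * (1 + (N : ℝ) ^ 2 / (Λ - 1))) ∧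
      r0 * Φ ^ 2 * (1 + (N : ℝ) ^ 2 / (Λ - 1)) ∉
        {e : ℝ | ∃ ξ, Feas ξ ∧ e = E ξ} := by
  intro Feas E
  change IsGLB {e | ∃ ξ, Admissible N Λ ξ ∧ e = dissipation N r0 p Φ ξ} _ ∧
    _ ∉ {e | ∃ ξ, Admissible N Λ ξ ∧ e = dissipation N r0 p Φ ξ}
  refine ⟨isGLB_of_mem_closure ?_ ?_, ?_⟩
  · rintro _ ⟨ξ, hξ, rfl⟩
    exact le_dissipation hN hr0 hξ
  · refine mem_closure_of_tendsto (tendsto_dissipation_concentrated hN hΛ hr0 p Φ) ?_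
    filter_upwards [eventually_pos_lt_leftmostVolume hN hΛ] with ε ⟨hε, hεa⟩
    exact ⟨_, admissible_concentrated_leftmostVolume hN hε hεa.le, rfl⟩
  · rintro ⟨ξ, hξ, heq⟩
    exact dissipation_ne hN hr0 hξ hp heq.symm

/-- Problem (P₂): if at least two outlet pressures differ, the infimum of the
dissipated energy `E(ξ) = qᵀ A_N(ξ) q` (with `q = M_N(ξ)⁻¹ b_N` the Poiseuille
flow) over admissible geometries `ξ` (positive, volume `Λ-1`, decreasing along
levels) equals `r₀Φ²(1 + N²/(Λ-1))` and is not attained. -/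
theorem stmt9 (N : ℕ) (hN : 1 ≤ N) (Λ r0 Φ : ℝ) (hΛ : 1 < Λ) (hr0 : 0 < r0)
    (hΦ : 0 < Φ) (p : Fin (2 ^ N) → ℝ)
    (hp : ∃ j : Fin (2 ^ N), ∃ h : j.1 + 1 < 2 ^ N, p j ≠ p ⟨j.1 + 1, h⟩) :
    let Feas : (ℕ → ℕ → ℝ) → Prop := fun ξ =>
      (∀ i ∈ Finset.Icc 1 N, ∀ j ∈ Finset.Icc 1 (2 ^ i), 0 < ξ i j) ∧
      (∑ i ∈ Finset.Icc 1 N, ∑ j ∈ Finset.Icc 1 (2 ^ i), ξ i j = Λ - 1) ∧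
      (∀ i ∈ Finset.Icc 1 (N - 1), ∀ j ∈ Finset.Icc 1 (2 ^ i),
        max (ξ (i + 1) (2 * j - 1)) (ξ (i + 1) (2 * j)) ≤ ξ i j)
    let E : (ℕ → ℕ → ℝ) → ℝ := fun ξ =>
      (MN N r0 ξ)⁻¹.mulVec (bN N p Φ) ⬝ᵥ
        (AN N r0 ξ).mulVec ((MN N r0 ξ)⁻¹.mulVec (bN N p Φ))
    IsGLB {e : ℝ | ∃ ξ, Feas ξ ∧ e = E ξ}
        (r0 * Φ ^ 2 * (1 + (N : ℝ) ^ 2 / (Λ - 1))) ∧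
      r0 * Φ ^ 2 * (1 + (N : ℝ) ^ 2 / (Λ - 1)) ∉
        {e : ℝ | ∃ ξ, Feas ξ ∧ e = E ξ} :=
  stmt9_general N hN Λ r0 Φ hΛ hr0 p hp
end

section
/- Let N ≥ 1, Λ > 1, and for ε > 0 small define ξ^ε by ξ^ε_{i,j} = (Λ-1)/N - ((2^{N+1}-2)/N - 1)ε for (i,j) on the path Π_{0→(N,1)} and ξ^ε_{i,j} = ε otherwise, and q^ε by q^ε_{i,j} = Φ on Π_{0→(N,1)} and 0 otherwise. Then (q^ε, ξ^ε) satisfies the level-flow constraints Σ_j q^ε_{i,j} = Φ and the volume constraint Σ_{(i,j)} ξ^ε_{i,j} = Λ-1 for all small ε > 0, and E(q^ε,ξ^ε) converges to r₀Φ²(1 + N²/(Λ-1)) as ε → 0. -/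
open Finset Filter Topology

/-- The minimizing sequence of Theorem 3.5: concentrate the geometry on the
leftmost root-to-leaf path `Π_{0→(N,1)}` (the branches `(i,1)`, `i = 1,…,N`),
putting `ξ^ε = (Λ-1)/N - ((2^{N+1}-2)/N - 1)ε` there and `ξ^ε = ε` elsewhere,
and all the flow `Φ` on that path.  For all small `ε > 0` the pair
`(q^ε, ξ^ε)` satisfies the level-flow and volume constraints, and the energy
`E(q^ε, ξ^ε)` converges to `r₀Φ²(1 + N²/(Λ-1))` as `ε → 0⁺`. -/
theorem stmt17 (N : ℕ) (hN : 1 ≤ N) (Λ r0 Φ : ℝ) (hΛ : 1 < Λ) (hr0 : 0 < r0)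
    (hΦ : 0 < Φ) :
    let ξε : ℝ → ℕ → ℕ → ℝ := fun ε i j =>
      if j = 1 then (Λ - 1) / N - (((2 ^ (N + 1) - 2 : ℕ) : ℝ) / N - 1) * ε
      else ε
    let qε : ℕ → ℕ → ℝ := fun _i j => if j = 1 then Φ else 0
    let E : (ℕ → ℕ → ℝ) → (ℕ → ℕ → ℝ) → ℝ := fun q ξ =>
      r0 * Φ ^ 2 + ∑ i ∈ Finset.Icc 1 N, ∑ j ∈ Finset.Icc 1 (2 ^ i),
        r0 * (q i j) ^ 2 / ξ i j
    (∃ ε₀ > (0 : ℝ), ∀ ε : ℝ, 0 < ε → ε < ε₀ →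
      (∀ i ∈ Finset.Icc 1 N, ∀ j ∈ Finset.Icc 1 (2 ^ i), 0 < ξε ε i j) ∧
      (∀ i ∈ Finset.Icc 1 N, ∑ j ∈ Finset.Icc 1 (2 ^ i), qε i j = Φ) ∧
      (∑ i ∈ Finset.Icc 1 N, ∑ j ∈ Finset.Icc 1 (2 ^ i), ξε ε i j = Λ - 1)) ∧
    Tendsto (fun ε => E qε (ξε ε)) (nhdsWithin 0 (Set.Ioi 0))
      (nhds (r0 * Φ ^ 2 * (1 + (N : ℝ) ^ 2 / (Λ - 1)))) := by
  intro ξε qε E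
  have hN0 : (0:ℝ) < N := by exact_mod_cast Nat.lt_of_lt_of_le Nat.zero_lt_one hN
  have hNne : (N:ℝ) ≠ 0 := ne_of_gt hN0
  have hΛ1 : (0:ℝ) < Λ - 1 := by linarith
  have h2 : (2:ℕ) ≤ 2 ^ (N + 1) := by
    calc (2:ℕ) = 2 ^ 1 := rfl
    _ ≤ 2 ^ (N + 1) := Nat.pow_le_pow_right (by norm_num) (by omega)
  have hMcast : (((2 ^ (N + 1) - 2 : ℕ) : ℝ)) = 2 ^ (N + 1) - 2 := by
    push_cast [Nat.cast_sub h2]; ring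
  have hMpos : (0:ℝ) < ((2 ^ (N + 1) - 2 : ℕ) : ℝ) := by
    have h4 : (4:ℕ) ≤ 2 ^ (N + 1) := by
      calc (4:ℕ) = 2 ^ 2 := rfl
      _ ≤ 2 ^ (N + 1) := Nat.pow_le_pow_right (by norm_num) (by omega)
    have : (0:ℕ) < 2 ^ (N + 1) - 2 := by omega
    exact_mod_cast this
  set M : ℝ := ((2 ^ (N + 1) - 2 : ℕ) : ℝ) with hM
  -- positivity of path entry for small ε
  have hpath : ∀ ε : ℝ, 0 < ε → ε < (Λ - 1) / M →
      0 < (Λ - 1) / N - (M / N - 1) * ε := by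
    intro ε hε hε'
    have h1 : (M / N - 1) * ε < (M / N) * ε := by
      nlinarith
    have h2' : (M / N) * ε < (M / N) * ((Λ - 1) / M) := by
      apply mul_lt_mul_of_pos_left hε' (by positivity)
    have h3 : (M / N) * ((Λ - 1) / M) = (Λ - 1) / N := by
      field_simp
    linarith
  -- geometric sum
  have hgeom : ∀ n : ℕ, ∑ i ∈ Icc 1 n, (2:ℝ) ^ i = 2 ^ (n + 1) - 2 := by
    intro n
    induction n with
    | zero => simp
    | succ k ih =>
      rw [Finset.sum_Icc_succ_top (by omega), ih]; ring
  have hone : ∀ i : ℕ, (1:ℕ) ∈ Finset.Icc 1 (2 ^ i) := by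
    intro i; simp [Nat.one_le_two_pow]
  constructor
  · refine ⟨(Λ - 1) / M, by positivity, fun ε hε hε' => ?_⟩
    refine ⟨?_, ?_, ?_⟩
    · intro i _ j _
      simp only [ξε]
      split_ifs
      · exact hpath ε hε hε'
      · exact hε
    · intro i _
      simp only [qε]
      rw [Finset.sum_ite_eq' (Finset.Icc 1 (2 ^ i)) 1 (fun _ => Φ)]
      simp [hone i]
    · have hrow : ∀ i : ℕ, ∑ j ∈ Finset.Icc 1 (2 ^ i), ξε ε i j
          = ((Λ - 1) / N - (M / N - 1) * ε - ε) + (2:ℝ) ^ i * ε := by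
        intro i
        have : ∀ j : ℕ, ξε ε i j
            = (if j = 1 then ((Λ - 1) / N - (M / N - 1) * ε - ε) else 0) + ε := by
          intro j; simp only [ξε]; split_ifs <;> ring
        simp only [this, Finset.sum_add_distrib, Finset.sum_const,
          Finset.sum_ite_eq' (Finset.Icc 1 (2 ^ i)) 1, hone i, if_true,
          Nat.card_Icc, nsmul_eq_mul]
        push_cast
        ring
      simp only [hrow, Finset.sum_add_distrib, Finset.sum_const, hgeom,
        Nat.card_Icc, nsmul_eq_mul, ← Finset.sum_mul]
      push_cast
      rw [← hMcast]
      field_simp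
      ring
  · -- energy limit
    have hE : ∀ ε : ℝ, E qε (ξε ε)
        = r0 * Φ ^ 2 + (N:ℝ) * (r0 * Φ ^ 2 / ((Λ - 1) / N - (M / N - 1) * ε)) := by
      intro ε
      have hrow : ∀ i : ℕ, ∑ j ∈ Finset.Icc 1 (2 ^ i),
          r0 * (qε i j) ^ 2 / ξε ε i j
          = r0 * Φ ^ 2 / ((Λ - 1) / N - (M / N - 1) * ε) := by
        intro i
        have : ∀ j : ℕ, r0 * (qε i j) ^ 2 / ξε ε i j
            = (if j = 1 then r0 * Φ ^ 2 / ((Λ - 1) / N - (M / N - 1) * ε) else 0) := by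
          intro j; simp only [qε, ξε]; split_ifs <;> first | simp | rfl
        simp only [this, Finset.sum_ite_eq' (Finset.Icc 1 (2 ^ i)) 1, hone i, if_true]
      simp only [E, hrow, Finset.sum_const, Nat.card_Icc, nsmul_eq_mul]
      push_cast
      ring
    simp only [hE]
    have hA : Tendsto (fun ε : ℝ => (Λ - 1) / N - (M / N - 1) * ε)
        (nhdsWithin 0 (Set.Ioi 0)) (nhds ((Λ - 1) / N)) := by
      have hc : Continuous (fun ε : ℝ => (Λ - 1) / N - (M / N - 1) * ε) := by
        continuity
      have := (hc.tendsto 0).mono_left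
        (nhdsWithin_le_nhds : nhdsWithin (0:ℝ) (Set.Ioi 0) ≤ nhds 0)
      simpa using this
    have hne : (Λ - 1) / N ≠ 0 := by positivity
    have key : r0 * Φ ^ 2 * (1 + (N : ℝ) ^ 2 / (Λ - 1))
        = r0 * Φ ^ 2 + (N:ℝ) * (r0 * Φ ^ 2 / ((Λ - 1) / N)) := by
      field_simp
    rw [key]
    exact tendsto_const_nhds.add
      (tendsto_const_nhds.mul (tendsto_const_nhds.div hA hne))
end
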